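/- arXiv:2306.08327 — 2 statements merged into one kernel-verified Lean document; each statement's English description precedes it below -/
import Mathlib

section
/- Let R ≅ Z_3 × R_2 × ⋯ × R_n where each R_i (2 ≤ i ≤ n) is a finite local commutative ring of characteristic 2. Then G_Id(R) contains no induced path on 4 vertices, i.e., G_Id(R) is a cograph. -/
/-- The idempotent graph of a ring: vertices are ring elements, distinct `x, y`
adjacent iff `x + y` is idempotent. -/
def idemGraph (R : Type*) [Ring R] : SimpleGraph R where
  Adj x y := x ≠ y ∧ IsIdempotentElem (x + y)
  symm := ⟨fun x y ⟨h, hi⟩ => ⟨h.symm, by rwa [add_comm]⟩⟩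
  loopless := ⟨fun x ⟨h, _⟩ => h rfl⟩

/-- The set of idempotent elements of a ring. -/
def idemSet (R : Type*) [Ring R] : Set R := {e : R | IsIdempotentElem e}

/-- A split graph: vertices partition into a clique and an independent set. -/
def IsSplitGraph {V : Type*} (G : SimpleGraph V) : Prop :=
  ∃ C I : Set V, Disjoint C I ∧ C ∪ I = Set.univ ∧ G.IsClique C ∧
    I.Pairwise (fun a b => ¬ G.Adj a b)

/-- A cograph: no induced path on four vertices. -/
def IsCograph {V : Type*} (G : SimpleGraph V) : Prop :=
  ¬ ∃ a b c d : V, a ≠ c ∧ a ≠ d ∧ b ≠ d ∧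
    G.Adj a b ∧ G.Adj b c ∧ G.Adj c d ∧ ¬ G.Adj a c ∧ ¬ G.Adj a d ∧ ¬ G.Adj b d

/-! The product `∏ Rᵢ` is a single commutative ring `T` of characteristic 2, where idempotents
are closed under addition and `x + z = (x + y) + (y + z)`. So along a path `a - b - c - d` in
`ZMod 3 × T` every pairwise sum of the `T`-components is idempotent. The three missing
edges must therefore all fail in the `ZMod 3` coordinate, and a check of the 81 quadruples
in `ZMod 3` shows that this is impossible. -/

theorem Prod.isIdempotentElem_iff {M N : Type*} [Mul M] [Mul N] {p : M × N} :
    IsIdempotentElem p ↔ IsIdempotentElem p.1 ∧ IsIdempotentElem p.2 :=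
  Prod.ext_iff

theorem add_self_eq_zero_of_one_add_one_eq_zero {S : Type*} [NonAssocSemiring S]
    (h2 : (1 : S) + 1 = 0) (x : S) : x + x = 0 := by
  rw [← one_mul x, ← add_mul, h2, zero_mul]

section CharTwo

variable {T : Type*} [CommRing T]

theorem IsIdempotentElem.add_of_one_add_one_eq_zero (h2 : (1 : T) + 1 = 0) {e f : T}
    (he : IsIdempotentElem e) (hf : IsIdempotentElem f) : IsIdempotentElem (e + f) :=
  he.add hf (by rw [mul_comm f e]; exact add_self_eq_zero_of_one_add_one_eq_zero h2 _)

theorem isIdempotentElem_add_trans (h2 : (1 : T) + 1 = 0) {x y z : T}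
    (hxy : IsIdempotentElem (x + y)) (hyz : IsIdempotentElem (y + z)) :
    IsIdempotentElem (x + z) := by
  have h := hxy.add_of_one_add_one_eq_zero h2 hyz
  rwa [show x + y + (y + z) = x + z + (y + y) by abel,
    add_self_eq_zero_of_one_add_one_eq_zero h2, add_zero] at h

end CharTwo

theorem ZMod.three_isIdempotentElem_add_of_path (x y z w : ZMod 3)
    (hxy : IsIdempotentElem (x + y)) (hyz : IsIdempotentElem (y + z))
    (hzw : IsIdempotentElem (z + w)) :
    IsIdempotentElem (x + z) ∨ IsIdempotentElem (x + w) ∨ IsIdempotentElem (y + w) := by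
  revert x y z w
  simp only [IsIdempotentElem]
  decide

theorem isCograph_idemGraph_zmod_three_prod {T : Type*} [CommRing T] (h2 : (1 : T) + 1 = 0) :
    IsCograph (idemGraph (ZMod 3 × T)) := by
  rintro ⟨a, b, c, d, hac, had, hbd, ⟨-, hab⟩, ⟨-, hbc⟩, ⟨-, hcd⟩, nac, nad, nbd⟩
  rw [Prod.isIdempotentElem_iff] at hab hbc hcd
  have hac₂ := isIdempotentElem_add_trans h2 hab.2 hbc.2
  have had₂ := isIdempotentElem_add_trans h2 hac₂ hcd.2
  have hbd₂ := isIdempotentElem_add_trans h2 hbc.2 hcd.2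
  rcases ZMod.three_isIdempotentElem_add_of_path _ _ _ _ hab.1 hbc.1 hcd.1 with h | h | h
  · exact nac ⟨hac, Prod.isIdempotentElem_iff.2 ⟨h, hac₂⟩⟩
  · exact nad ⟨had, Prod.isIdempotentElem_iff.2 ⟨h, had₂⟩⟩
  · exact nbd ⟨hbd, Prod.isIdempotentElem_iff.2 ⟨h, hbd₂⟩⟩

theorem stmt8_general {m : ℕ} (R : Fin m → Type*) [∀ i, CommRing (R i)]
    (hchar : ∀ i, (1 : R i) + 1 = 0) :
    IsCograph (idemGraph (ZMod 3 × (∀ i, R i))) :=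
  isCograph_idemGraph_zmod_three_prod (funext hchar)

theorem stmt8 {m : ℕ} (hm : 1 ≤ m) (R : Fin m → Type*) [∀ i, CommRing (R i)]
    [∀ i, IsLocalRing (R i)] [∀ i, Fintype (R i)]
    (hchar : ∀ i, (1 : R i) + 1 = 0) :
    IsCograph (idemGraph (ZMod 3 × (∀ i, R i))) :=
  stmt8_general R hchar
end

section
/- Let R be any finite non-local commutative ring with unity. Then the idempotent graph G_Id(R) is not outerplanar. -/
/-- `G` contains a subdivision of `H`: branch vertices joined by internally
disjoint paths. -/
def ContainsSubdivision {V W : Type*} (G : SimpleGraph V) (H : SimpleGraph W) : Prop :=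
  ∃ (b : W → V) (P : ∀ u v : W, H.Adj u v → G.Walk (b u) (b v)),
    Function.Injective b ∧
    (∀ u v (h : H.Adj u v), (P u v h).IsPath) ∧
    (∀ u v (h : H.Adj u v) (w : W), b w ∈ (P u v h).support → w = u ∨ w = v) ∧
    (∀ u v u' v' (h : H.Adj u v) (h' : H.Adj u' v'), s(u, v) ≠ s(u', v') →
      ∀ x, x ∈ (P u v h).support → x ∈ (P u' v' h').support →
        x ∈ ({b u, b v} : Set V) ∩ {b u', b v'})

/-- Planarity via the Kuratowski criterion: no subdivision of `K₅` or `K₃,₃`. -/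
def IsPlanar {V : Type*} (G : SimpleGraph V) : Prop :=
  ¬ ContainsSubdivision G (SimpleGraph.completeGraph (Fin 5)) ∧
  ¬ ContainsSubdivision G (completeBipartiteGraph (Fin 3) (Fin 3))

/-- Outerplanarity via the forbidden-subdivision criterion: no subdivision of
`K₄` or `K₂,₃`. -/
def IsOuterplanar {V : Type*} (G : SimpleGraph V) : Prop :=
  ¬ ContainsSubdivision G (SimpleGraph.completeGraph (Fin 4)) ∧
  ¬ ContainsSubdivision G (completeBipartiteGraph (Fin 2) (Fin 3))

/-!
A non-local finite commutative ring has an idempotent `e ∉ {0, 1}`; put `f = 1 - e`. The four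
vertices `0, e, f, 1` are the branch vertices of a subdivided `K₄` in the idempotent graph:
`0` is adjacent to each idempotent and `e + f = 1`, while `e` and `f` reach `1` through
`-e` and `-f` respectively, since `e + (-e) = 0` and `-e + 1 = f` are idempotent.
-/

open SimpleGraph

/-- Assigning every non-branch vertex to a single edge of `H` (via `edgeOf`) makes the paths
internally disjoint automatically. -/
theorem containsSubdivision_of_exists_isPath {V W : Type*} {G : SimpleGraph V}
    {H : SimpleGraph W} (b : W → V) (hb : Function.Injective b) (edgeOf : V → Sym2 W)
    (hpath : ∀ u w, H.Adj u w → ∃ p : G.Walk (b u) (b w), p.IsPath ∧ ∀ x ∈ p.support,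
      x ∈ ({b u, b w} : Set V) ∨ (x ∉ Set.range b ∧ edgeOf x = s(u, w))) :
    ContainsSubdivision G H := by
  choose P hP hsupp using hpath
  have hrange {x : V} {u w : W} (hx : x ∈ ({b u, b w} : Set V)) : x ∈ Set.range b := by
    rcases hx with rfl | rfl <;> exact ⟨_, rfl⟩
  refine ⟨b, P, hb, hP, fun u w h t ht => ?_, fun u w u' w' h h' hne x hx hx' => ?_⟩
  · rcases hsupp u w h _ ht with ht | ⟨ht, -⟩
    · simpa [hb.eq_iff] using ht
    · exact absurd ⟨t, rfl⟩ ht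
  · rcases hsupp u w h x hx with h₁ | ⟨hxb, hxe⟩ <;>
      rcases hsupp u' w' h' x hx' with h₂ | ⟨hxb', hxe'⟩
    · exact ⟨h₁, h₂⟩
    · exact absurd (hrange h₁) hxb'
    · exact absurd (hrange h₂) hxb
    · exact absurd (hxe.symm.trans hxe') hne

theorem containsSubdivision_of_exists_isPath_of_lt {V W : Type*} [LinearOrder W]
    {G : SimpleGraph V} {H : SimpleGraph W} (b : W → V) (hb : Function.Injective b)
    (edgeOf : V → Sym2 W)
    (hpath : ∀ u w, H.Adj u w → u < w → ∃ p : G.Walk (b u) (b w), p.IsPath ∧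
      ∀ x ∈ p.support, x ∈ ({b u, b w} : Set V) ∨ (x ∉ Set.range b ∧ edgeOf x = s(u, w))) :
    ContainsSubdivision G H := by
  refine containsSubdivision_of_exists_isPath b hb edgeOf fun u w huw => ?_
  rcases lt_or_gt_of_ne huw.ne with hlt | hlt
  · exact hpath u w huw hlt
  obtain ⟨p, hp, hs⟩ := hpath w u huw.symm hlt
  refine ⟨p.reverse, hp.reverse, fun x hx => ?_⟩
  rw [Walk.support_reverse, List.mem_reverse] at hx
  rw [Set.pair_comm, Sym2.eq_swap]
  exact hs x hx

namespace idemGraph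

variable {R : Type*} [CommRing R]

theorem exists_isPath_of_isIdempotentElem_add {x y : R} (h : IsIdempotentElem (x + y)) :
    ∃ p : (idemGraph R).Walk x y, p.IsPath ∧ ∀ z ∈ p.support, z = x ∨ z = y := by
  by_cases hxy : x = y
  · subst hxy
    exact ⟨.nil, .nil, by simp⟩
  · have hadj : (idemGraph R).Adj x y := ⟨hxy, h⟩
    exact ⟨hadj.toWalk, .of_adj hadj, by simp⟩

theorem exists_isPath_of_mul_eq {a c : R} (ha : IsIdempotentElem a) (hc : IsIdempotentElem c)
    (hac : a * c = a) :
    ∃ p : (idemGraph R).Walk a c, p.IsPath ∧ ∀ x ∈ p.support, x = a ∨ x = c ∨ x = -a := by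
  classical
  obtain ⟨p, -, hp⟩ :=
    exists_isPath_of_isIdempotentElem_add (x := a) (y := -a) (by simp [IsIdempotentElem.zero])
  have hsub : IsIdempotentElem (-a + c) := by
    rw [IsIdempotentElem] at ha hc ⊢
    linear_combination hc + ha - 2 * hac
  obtain ⟨q, -, hq⟩ := exists_isPath_of_isIdempotentElem_add hsub
  refine ⟨(p.append q).bypass, (p.append q).bypass_isPath, fun x hx => ?_⟩
  rcases (Walk.mem_support_append_iff p q).1 ((p.append q).support_bypass_subset_support hx)
    with hx | hx
  · rcases hp x hx with h | h <;> simp [h]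
  · rcases hq x hx with h | h <;> simp [h]

theorem containsSubdivision_completeGraph_four {e : R} (he : IsIdempotentElem e)
    (he0 : e ≠ 0) (he1 : e ≠ 1) :
    ContainsSubdivision (idemGraph R) (completeGraph (Fin 4)) := by
  classical
  have : Nontrivial R := nontrivial_of_ne e 0 he0
  have hf : IsIdempotentElem (1 - e) := he.one_sub
  have hef : e ≠ 1 - e := fun h => he0 <| by
    rw [IsIdempotentElem] at he
    linear_combination e * h - 2 * he
  have hne : -e ≠ 1 - e := fun h => one_ne_zero (by linear_combination -h)
  have hnf : -(1 - e) ≠ -e := neg_inj.not.2 hef.symm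
  have hb : Function.Injective ![0, e, 1 - e, 1] := by
    intro i j hij
    fin_cases i <;> fin_cases j <;> simp_all [eq_sub_iff_add_eq, eq_comm]
  -- The only non-branch vertices on the paths are `-e` on `e ⇝ 1` and `-(1 - e)` on `1 - e ⇝ 1`.
  refine containsSubdivision_of_exists_isPath_of_lt _ hb
    (fun x => if x = -e then s(1, 3) else s(2, 3)) fun u w _ hlt => ?_
  fin_cases u <;> fin_cases w <;> try simp at hlt
  · obtain ⟨p, hp, hs⟩ := exists_isPath_of_mul_eq .zero he (zero_mul e)
    exact ⟨p, hp, fun x hx => .inl (by rcases hs x hx with rfl | rfl | rfl <;> simp)⟩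
  · obtain ⟨p, hp, hs⟩ := exists_isPath_of_mul_eq .zero hf (zero_mul _)
    exact ⟨p, hp, fun x hx => .inl (by rcases hs x hx with rfl | rfl | rfl <;> simp)⟩
  · obtain ⟨p, hp, hs⟩ := exists_isPath_of_mul_eq .zero .one (zero_mul (1 : R))
    exact ⟨p, hp, fun x hx => .inl (by rcases hs x hx with rfl | rfl | rfl <;> simp)⟩
  · obtain ⟨p, hp, hs⟩ := exists_isPath_of_isIdempotentElem_add (x := e) (y := 1 - e)
      (by simpa using IsIdempotentElem.one)
    exact ⟨p, hp, fun x hx => .inl (hs x hx)⟩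
  · obtain ⟨p, hp, hs⟩ := exists_isPath_of_mul_eq he .one (mul_one e)
    refine ⟨p, hp, fun x hx => ?_⟩
    rcases hs x hx with h | h | rfl
    · exact .inl (.inl h)
    · exact .inl (.inr h)
    · by_cases h : -e = e ∨ -e = 1
      · exact .inl h
      · exact .inr ⟨by simp_all [Matrix.range_cons], if_pos rfl⟩
  · obtain ⟨p, hp, hs⟩ := exists_isPath_of_mul_eq hf .one (mul_one _)
    refine ⟨p, hp, fun x hx => ?_⟩
    rcases hs x hx with h | h | rfl
    · exact .inl (.inl h)
    · exact .inl (.inr h)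
    · by_cases h : -(1 - e) = 1 - e ∨ -(1 - e) = 1
      · exact .inl h
      · exact .inr ⟨by simp_all [Matrix.range_cons, sub_eq_zero], if_neg hnf⟩

end idemGraph

theorem IsArtinianRing.exists_isIdempotentElem_ne_zero_ne_one {R : Type*} [CommRing R]
    [IsArtinianRing R] {p q : Ideal R} [p.IsPrime] (hq : q.IsPrime) (hpq : q ≠ p) :
    ∃ e : R, IsIdempotentElem e ∧ e ≠ 0 ∧ e ≠ 1 := by
  obtain ⟨e, hep, he, heq⟩ := IsArtinianRing.exists_not_mem_forall_mem_of_ne p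
  refine ⟨e, he, fun h => hep (h ▸ p.zero_mem), fun h => hq.ne_top ?_⟩
  exact (Ideal.eq_top_iff_one q).2 (h ▸ heq q hq hpq)

theorem stmt14 {R : Type*} [CommRing R] [Fintype R]
    (hnonlocal : ∃ m₁ m₂ : Ideal R, m₁.IsMaximal ∧ m₂.IsMaximal ∧ m₁ ≠ m₂) :
    ¬ IsOuterplanar (idemGraph R) := by
  obtain ⟨m₁, m₂, h₁, h₂, hne⟩ := hnonlocal
  have := h₁.isPrime
  obtain ⟨e, he, he0, he1⟩ :=
    IsArtinianRing.exists_isIdempotentElem_ne_zero_ne_one h₂.isPrime hne.symm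
  exact fun h => h.1 (idemGraph.containsSubdivision_completeGraph_four he he0 he1)
end
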